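/- For an antisymmetric Hilbert–Schmidt operator T : K₁ → K₂, the operator U_T := (P₁+T)(P₁+T*T)^{-1/2} + (P₂-T*)(P₂+TT*)^{-1/2} is a unitary Bogoliubov operator satisfying U_T P₁ U_T* = P_T, and U_T - 1 is Hilbert–Schmidt. -/

import Mathlib

open ContinuousLinearMap

/-- `T` is a Hilbert–Schmidt operator. -/
def IsHS {K : Type*} [NormedAddCommGroup K] [InnerProductSpace ℂ K]
    (T : K →L[ℂ] K) : Prop :=
  ∃ (ι : Type) (b : HilbertBasis ι ℂ K), Summable fun i => ‖T (b i)‖ ^ 2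

/-- The conjugate operator `Ā = J A J` of `A` with respect to the conjugation `J`. -/
noncomputable def conjOp {K : Type*} [NormedAddCommGroup K] [InnerProductSpace ℂ K]
    (J : K ≃ₗᵢ⋆[ℂ] K) (A : K →L[ℂ] K) : K →L[ℂ] K :=
  LinearMap.mkContinuous
    { toFun := fun f => J (A (J f))
      map_add' := by intro x y; simp
      map_smul' := by intro c x; simp [map_smulₛₗ] }
    ‖A‖ fun f => by
      calc ‖J (A (J f))‖ = ‖A (J f)‖ := J.norm_map _
        _ ≤ ‖A‖ * ‖J f‖ := A.le_opNorm _
        _ = ‖A‖ * ‖f‖ := by rw [J.norm_map]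

section Aux

open scoped InnerProductSpace ComplexConjugate ENNReal NNReal

set_option linter.unusedSectionVars false

variable {K : Type*} [NormedAddCommGroup K] [InnerProductSpace ℂ K] [CompleteSpace K]

/- ### CFC helpers -/

lemma stmt7_commute_cfc (a b : K →L[ℂ] K) (ha : IsSelfAdjoint a) (hab : Commute b a)
    (f : ℝ → ℝ) : Commute b (cfc f a) := by
  by_cases hf : ContinuousOn f (spectrum ℝ a)
  · rw [cfc_apply f a ha hf]
    have H : ∀ g : C(spectrum ℝ a, ℝ), Commute b (cfcHom ha g) := by
      intro g
      induction g using ContinuousMap.induction_on_of_compact with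
      | const r =>
        have : ContinuousMap.const (spectrum ℝ a) r = algebraMap ℝ C(spectrum ℝ a, ℝ) r := rfl
        rw [this, AlgHomClass.commutes]
        exact Algebra.commute_algebraMap_right r b
      | id => rw [cfcHom_id ha]; exact hab
      | star_id => rw [star_trivial, cfcHom_id ha]; exact hab
      | add f g hf hg => rw [map_add]; exact hf.add_right hg
      | mul f g hf hg => rw [map_mul]; exact hf.mul_right hg
      | frequently f hf =>
        have hcl : IsClosed {g : C(spectrum ℝ a, ℝ) | Commute b (cfcHom ha g)} := by
          have : Continuous (cfcHom ha (R := ℝ)) := (cfcHom_isClosedEmbedding ha).continuous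
          exact isClosed_eq (by continuity) (by continuity)
        exact hcl.mem_of_frequently_of_tendsto hf Filter.tendsto_id
    exact H _
  · rw [cfc_apply_of_not_continuousOn a hf]; exact Commute.zero_right b

lemma stmt7_pos_sqrt_eq (x r : K →L[ℂ] K) (hr : 0 ≤ r) (hrx : r * r = x) :
    r = cfc Real.sqrt x := by
  have hrsa : IsSelfAdjoint r := IsSelfAdjoint.of_nonneg hr
  have hmul : cfc (fun y : ℝ => y * y) r = x := by
    rw [cfc_mul .., cfc_id' ℝ r, hrx]
  calc r = cfc (id : ℝ → ℝ) r := (cfc_id ℝ r).symm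
    _ = cfc (Real.sqrt ∘ fun y : ℝ => y * y) r := by
        refine cfc_congr fun y hy => ?_
        have : (0:ℝ) ≤ y := spectrum_nonneg_of_nonneg hr hy
        simp [Real.sqrt_mul_self this]
    _ = cfc Real.sqrt (cfc (fun y : ℝ => y * y) r) := by
        rw [cfc_comp Real.sqrt (fun y : ℝ => y * y) r]
    _ = cfc Real.sqrt x := by rw [hmul]

lemma stmt7_commute_sqrt (x r b : K →L[ℂ] K) (hr : 0 ≤ r) (hrx : r * r = x)
    (hbx : Commute b x) : Commute b r := by
  have hx : 0 ≤ x := by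
    have h := star_mul_self_nonneg r
    rwa [(IsSelfAdjoint.of_nonneg hr).star_eq, hrx] at h
  rw [stmt7_pos_sqrt_eq x r hr hrx]
  exact stmt7_commute_cfc x b (IsSelfAdjoint.of_nonneg hx) hbx Real.sqrt

lemma stmt7_pos_sqrt_unique (r s : K →L[ℂ] K) (hr : 0 ≤ r) (hs : 0 ≤ s)
    (h : r * r = s * s) : r = s :=
  (stmt7_pos_sqrt_eq (s*s) r hr h).trans (stmt7_pos_sqrt_eq (s*s) s hs rfl).symm

/- ### conjOp helpers -/

variable (J : K ≃ₗᵢ⋆[ℂ] K)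

lemma conjOp_apply (A : K →L[ℂ] K) (x : K) : conjOp J A x = J (A (J x)) := rfl

lemma J_inner (u v : K) : ⟪J u, J v⟫_ℂ = ⟪v, u⟫_ℂ := by
  have hI : ∀ w : K, Complex.I • J w = J ((-Complex.I) • w) := by
    intro w; rw [J.map_smulₛₗ]; simp
  have h1 : ‖J u + J v‖ = ‖u + v‖ := by rw [← map_add, J.norm_map]
  have h2 : ‖J u - J v‖ = ‖u - v‖ := by rw [← map_sub, J.norm_map]
  have h3 : ‖J u - Complex.I • J v‖ = ‖u + Complex.I • v‖ := by
    rw [hI, ← map_sub, J.norm_map]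
    congr 1
    rw [neg_smul, sub_neg_eq_add]
  have h4 : ‖J u + Complex.I • J v‖ = ‖u - Complex.I • v‖ := by
    rw [hI, ← map_add, J.norm_map]
    congr 1
    rw [neg_smul, ← sub_eq_add_neg]
  have k3 : ‖v - Complex.I • u‖ = ‖u + Complex.I • v‖ := by
    have e : Complex.I • (v - Complex.I • u) = u + Complex.I • v := by
      rw [smul_sub, smul_smul, Complex.I_mul_I, neg_one_smul, sub_neg_eq_add, add_comm]
    calc ‖v - Complex.I • u‖ = ‖Complex.I‖ * ‖v - Complex.I • u‖ := by
          rw [Complex.norm_I, one_mul]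
      _ = ‖Complex.I • (v - Complex.I • u)‖ := (norm_smul _ _).symm
      _ = _ := by rw [e]
  have k4 : ‖v + Complex.I • u‖ = ‖u - Complex.I • v‖ := by
    have e : Complex.I • (v + Complex.I • u) = -(u - Complex.I • v) := by
      rw [smul_add, smul_smul, Complex.I_mul_I, neg_one_smul]
      abel
    calc ‖v + Complex.I • u‖ = ‖Complex.I‖ * ‖v + Complex.I • u‖ := by
          rw [Complex.norm_I, one_mul]
      _ = ‖Complex.I • (v + Complex.I • u)‖ := (norm_smul _ _).symm
      _ = _ := by rw [e, norm_neg]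
  rw [inner_eq_sum_norm_sq_div_four, inner_eq_sum_norm_sq_div_four]
  simp only [RCLike.I_to_complex]
  rw [h1, h2, h3, h4, add_comm v u, norm_sub_rev v u, k3, k4]

lemma conjOp_mul (hJ : ∀ f, J (J f) = f) (A B : K →L[ℂ] K) :
    conjOp J (A * B) = conjOp J A * conjOp J B := by
  ext x; simp [conjOp_apply, mul_apply, hJ]

lemma conjOp_one (hJ : ∀ f, J (J f) = f) : conjOp J (1 : K →L[ℂ] K) = 1 := by
  ext x; simp [conjOp_apply, hJ]

lemma conjOp_add (A B : K →L[ℂ] K) : conjOp J (A + B) = conjOp J A + conjOp J B := by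
  ext x; simp [conjOp_apply]

lemma conjOp_sub (A B : K →L[ℂ] K) : conjOp J (A - B) = conjOp J A - conjOp J B := by
  ext x; simp [conjOp_apply]

lemma conjOp_neg (A : K →L[ℂ] K) : conjOp J (-A) = -conjOp J A := by
  ext x; simp [conjOp_apply]

lemma conjOp_conjOp (hJ : ∀ f, J (J f) = f) (A : K →L[ℂ] K) : conjOp J (conjOp J A) = A := by
  ext x; simp [conjOp_apply, hJ]

lemma conjOp_adjoint (hJ : ∀ f, J (J f) = f) (A : K →L[ℂ] K) :
    conjOp J (adjoint A) = adjoint (conjOp J A) := by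
  rw [eq_adjoint_iff]
  intro x y
  rw [conjOp_apply, conjOp_apply]
  calc ⟪J (adjoint A (J x)), y⟫_ℂ = ⟪J (adjoint A (J x)), J (J y)⟫_ℂ := by rw [hJ]
    _ = ⟪J y, adjoint A (J x)⟫_ℂ := J_inner J _ _
    _ = ⟪A (J y), J x⟫_ℂ := by rw [adjoint_inner_right]
    _ = ⟪J (J (A (J y))), J x⟫_ℂ := by rw [hJ]
    _ = ⟪x, J (A (J y))⟫_ℂ := J_inner J _ _

lemma conjOp_isPositive (hJ : ∀ f, J (J f) = f) (A : K →L[ℂ] K) (hA : A.IsPositive) :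
    (conjOp J A).IsPositive := by
  constructor
  · have h := hA.isSelfAdjoint
    rw [isSelfAdjoint_iff'] at h
    have h' : IsSelfAdjoint (conjOp J A) := by
      rw [isSelfAdjoint_iff', ← conjOp_adjoint J hJ, h]
    exact h'.isSymmetric
  · intro x
    have key : ⟪(conjOp J A) x, x⟫_ℂ = conj ⟪A (J x), J x⟫_ℂ := by
      calc ⟪J (A (J x)), x⟫_ℂ = ⟪J (A (J x)), J (J x)⟫_ℂ := by rw [hJ]
        _ = ⟪J x, A (J x)⟫_ℂ := J_inner J _ _
        _ = conj ⟪A (J x), J x⟫_ℂ := (inner_conj_symm _ _).symm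
    rw [reApplyInnerSelf_apply, key]
    simp only [RCLike.re_to_complex, Complex.conj_re]
    have := hA.2 (J x)
    rw [reApplyInnerSelf_apply] at this
    simpa using this

/- ### Hilbert–Schmidt helpers -/

lemma stmt7_parseval_enn {ι : Type*} (b : HilbertBasis ι ℂ K) (x : K) :
    ∑' i, (‖⟪b i, x⟫_ℂ‖₊ ^ 2 : ℝ≥0∞) = (‖x‖₊ ^ 2 : ℝ≥0∞) := by
  have h := b.hasSum_inner_mul_inner x x
  have h2 : HasSum (fun i => (⟪x, b i⟫_ℂ * ⟪b i, x⟫_ℂ).re) (⟪x, x⟫_ℂ).re :=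
    h.mapL Complex.reCLM
  have h3 : HasSum (fun i => ‖⟪b i, x⟫_ℂ‖ ^ 2) (‖x‖ ^ 2) := by
    convert h2 using 2 with i
    · rw [← inner_conj_symm x (b i), mul_comm, Complex.mul_conj]
      simp [Complex.sq_norm]
    · have := inner_self_eq_norm_sq (𝕜 := ℂ) (x := x)
      simpa [RCLike.re_to_complex] using this.symm
  have h4 : HasSum (fun i => (‖⟪b i, x⟫_ℂ‖₊ ^ 2 : ℝ≥0)) (‖x‖₊ ^ 2) := by
    rw [← NNReal.hasSum_coe]
    push_cast
    exact h3
  exact ENNReal.tsum_coe_eq h4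

lemma stmt7_hs_key (T : K →L[ℂ] K) {ι ι' : Type*} (b : HilbertBasis ι ℂ K)
    (c : HilbertBasis ι' ℂ K) :
    ∑' i, (‖T (b i)‖₊ ^ 2 : ℝ≥0∞) = ∑' j, (‖(adjoint T) (c j)‖₊ ^ 2 : ℝ≥0∞) := by
  calc ∑' i, (‖T (b i)‖₊ ^ 2 : ℝ≥0∞)
      = ∑' i, ∑' j, (‖⟪c j, T (b i)⟫_ℂ‖₊ ^ 2 : ℝ≥0∞) :=
        tsum_congr fun i => (stmt7_parseval_enn c (T (b i))).symm
    _ = ∑' j, ∑' i, (‖⟪c j, T (b i)⟫_ℂ‖₊ ^ 2 : ℝ≥0∞) := ENNReal.tsum_comm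
    _ = ∑' j, ∑' i, (‖⟪b i, (adjoint T) (c j)⟫_ℂ‖₊ ^ 2 : ℝ≥0∞) := by
        refine tsum_congr fun j => tsum_congr fun i => ?_
        have : ⟪b i, (adjoint T) (c j)⟫_ℂ = conj ⟪c j, T (b i)⟫_ℂ := by
          rw [← inner_conj_symm, adjoint_inner_left]
        rw [this, RCLike.nnnorm_conj]
    _ = ∑' j, (‖(adjoint T) (c j)‖₊ ^ 2 : ℝ≥0∞) :=
        tsum_congr fun j => stmt7_parseval_enn b _

lemma stmt7_summable_iff_enn (T : K →L[ℂ] K) {ι : Type*} (b : HilbertBasis ι ℂ K) :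
    (Summable fun i => ‖T (b i)‖ ^ 2) ↔ ∑' i, (‖T (b i)‖₊ ^ 2 : ℝ≥0∞) ≠ ⊤ := by
  have e : ∀ i, (‖T (b i)‖₊ ^ 2 : ℝ≥0∞) = ((‖T (b i)‖₊ ^ 2 : ℝ≥0) : ℝ≥0∞) := fun i => by
    push_cast; ring
  rw [tsum_congr e, ENNReal.tsum_coe_ne_top_iff_summable, ← NNReal.summable_coe]
  exact summable_congr fun i => by push_cast; ring

lemma IsHS.summable' {T : K →L[ℂ] K} (hT : IsHS T) {ι' : Type*} (c : HilbertBasis ι' ℂ K) :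
    Summable fun j => ‖T (c j)‖ ^ 2 := by
  obtain ⟨ι, b, hb⟩ := hT
  rw [stmt7_summable_iff_enn] at *
  rw [stmt7_hs_key T c b, stmt7_hs_key (adjoint T) b b, adjoint_adjoint]
  exact hb

lemma IsHS.adjoint' {T : K →L[ℂ] K} (hT : IsHS T) : IsHS (adjoint T) := by
  obtain ⟨ι, b, hb⟩ := hT
  refine ⟨ι, b, ?_⟩
  rw [stmt7_summable_iff_enn] at *
  rw [stmt7_hs_key (adjoint T) b b, adjoint_adjoint]
  exact hb

lemma IsHS.compL {A : K →L[ℂ] K} (hA : IsHS A) (B : K →L[ℂ] K) : IsHS (B ∘L A) := by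
  obtain ⟨ι, b, hb⟩ := hA
  refine ⟨ι, b, Summable.of_nonneg_of_le (fun i => sq_nonneg _) (fun i => ?_)
    (hb.mul_left (‖B‖ ^ 2))⟩
  have h1 : ‖B (A (b i))‖ ≤ ‖B‖ * ‖A (b i)‖ := B.le_opNorm _
  calc ‖(B ∘L A) (b i)‖ ^ 2 = ‖B (A (b i))‖ ^ 2 := rfl
    _ ≤ (‖B‖ * ‖A (b i)‖) ^ 2 := by nlinarith [norm_nonneg (B (A (b i))), norm_nonneg (A (b i))]
    _ = ‖B‖ ^ 2 * ‖A (b i)‖ ^ 2 := by ring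

lemma IsHS.compR {A : K →L[ℂ] K} (hA : IsHS A) (B : K →L[ℂ] K) : IsHS (A ∘L B) := by
  have h1 : IsHS (adjoint B ∘L adjoint A) := hA.adjoint'.compL (adjoint B)
  have h2 := h1.adjoint'
  rwa [adjoint_comp, adjoint_adjoint, adjoint_adjoint] at h2

lemma IsHS.neg' {A : K →L[ℂ] K} (hA : IsHS A) : IsHS (-A) := by
  obtain ⟨ι, b, hb⟩ := hA
  exact ⟨ι, b, by simpa using hb⟩

lemma IsHS.add' {A B : K →L[ℂ] K} (hA : IsHS A) (hB : IsHS B) : IsHS (A + B) := by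
  obtain ⟨ι, b, hb⟩ := hA
  have hb' := hB.summable' b
  refine ⟨ι, b, Summable.of_nonneg_of_le (fun i => sq_nonneg _) (fun i => ?_)
    ((hb.add hb').mul_left 2)⟩
  have h1 : ‖A (b i) + B (b i)‖ ≤ ‖A (b i)‖ + ‖B (b i)‖ := norm_add_le _ _
  have h2 : ‖(A + B) (b i)‖ = ‖A (b i) + B (b i)‖ := rfl
  rw [h2]
  nlinarith [sq_nonneg (‖A (b i)‖ - ‖B (b i)‖), norm_nonneg (A (b i) + B (b i)),
    norm_nonneg (A (b i)), norm_nonneg (B (b i))]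

lemma IsHS.sub' {A B : K →L[ℂ] K} (hA : IsHS A) (hB : IsHS B) : IsHS (A - B) := by
  rw [sub_eq_add_neg]; exact hA.add' hB.neg'

end Aux

lemma stmt7_isUnit_one_add {K : Type*} [NormedAddCommGroup K] [InnerProductSpace ℂ K]
    [CompleteSpace K] (W : K →L[ℂ] K) (hW : 0 ≤ W) : IsUnit (1 + W) := by
  have h : (-1 : ℝ) ∉ spectrum ℝ W := fun hmem => by
    have := spectrum_nonneg_of_nonneg hW hmem
    linarith
  rw [spectrum.notMem_iff] at h
  have e : algebraMap ℝ (K →L[ℂ] K) (-1) - W = -(1 + W) := by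
    rw [map_neg, map_one]; abel
  rw [e, IsUnit.neg_iff] at h
  exact h

set_option maxHeartbeats 1000000

/-- `U_T = (P₁+T)(P₁+T*T)^{-1/2} + (P₂-T*)(P₂+TT*)^{-1/2}` is a unitary Bogoliubov
operator with `U_T P₁ U_T* = P_T` and `U_T - 1` Hilbert–Schmidt. Here `X, X'` are the
inverses of `P₁+T*T`, `P₂+TT*` on `K₁`, `K₂` (extended by zero) and `R, R'` their
positive square roots. -/
theorem stmt7 {K : Type*} [NormedAddCommGroup K] [InnerProductSpace ℂ K] [CompleteSpace K]
    (J : K ≃ₗᵢ⋆[ℂ] K) (hJ : ∀ f, J (J f) = f)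
    (P₁ : K →L[ℂ] K) (hP₁sa : IsSelfAdjoint P₁) (hP₁idem : P₁ ∘L P₁ = P₁)
    (hP₁conj : conjOp J P₁ = 1 - P₁)
    (T : K →L[ℂ] K) (hTsupp : T = (1 - P₁) ∘L T ∘L P₁)
    (hTanti : conjOp J (adjoint T) = -T) (hTHS : IsHS T)
    (X X' R R' : K →L[ℂ] K)
    (hX1 : (P₁ + adjoint T ∘L T) ∘L X = P₁) (hX2 : X ∘L (P₁ + adjoint T ∘L T) = P₁)
    (hX3 : X = P₁ ∘L X ∘L P₁)
    (hX'1 : ((1 - P₁) + T ∘L adjoint T) ∘L X' = 1 - P₁)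
    (hX'2 : X' ∘L ((1 - P₁) + T ∘L adjoint T) = 1 - P₁)
    (hX'3 : X' = (1 - P₁) ∘L X' ∘L (1 - P₁))
    (hR : R ∘L R = X) (hRpos : R.IsPositive) (hRsupp : R = P₁ ∘L R ∘L P₁)
    (hR' : R' ∘L R' = X') (hR'pos : R'.IsPositive)
    (hR'supp : R' = (1 - P₁) ∘L R' ∘L (1 - P₁)) :
    adjoint ((P₁ + T) ∘L R + ((1 - P₁) - adjoint T) ∘L R') ∘L
        ((P₁ + T) ∘L R + ((1 - P₁) - adjoint T) ∘L R') = 1 ∧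
      ((P₁ + T) ∘L R + ((1 - P₁) - adjoint T) ∘L R') ∘L
        adjoint ((P₁ + T) ∘L R + ((1 - P₁) - adjoint T) ∘L R') = 1 ∧
      conjOp J ((P₁ + T) ∘L R + ((1 - P₁) - adjoint T) ∘L R') =
        (P₁ + T) ∘L R + ((1 - P₁) - adjoint T) ∘L R' ∧
      ((P₁ + T) ∘L R + ((1 - P₁) - adjoint T) ∘L R') ∘L P₁ ∘L
          adjoint ((P₁ + T) ∘L R + ((1 - P₁) - adjoint T) ∘L R') =
        (P₁ + T) ∘L X ∘L (P₁ + adjoint T) ∧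
      IsHS (((P₁ + T) ∘L R + ((1 - P₁) - adjoint T) ∘L R') - 1) := by
  set S : K →L[ℂ] K := adjoint T with hSdef
  simp only [← ContinuousLinearMap.mul_def] at hP₁idem hTsupp hX1 hX2 hX3 hX'1 hX'2 hX'3 hR hRsupp hR' hR'supp ⊢
  -- basic projection algebra
  have hPP : P₁ * P₁ = P₁ := hP₁idem
  have hQ0 : P₁ * (1 - P₁) = 0 := by rw [mul_sub, mul_one, hPP, sub_self]
  have hQ0' : (1 - P₁) * P₁ = 0 := by rw [sub_mul, one_mul, hPP, sub_self]
  have hTP : T * P₁ = T := by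
    conv_lhs => rw [hTsupp, mul_assoc, mul_assoc, hPP]
    exact hTsupp.symm
  have hPT : P₁ * T = 0 := by
    conv_lhs => rw [hTsupp, ← mul_assoc, hQ0, zero_mul]
  have hQT : (1 - P₁) * T = T := by rw [sub_mul, one_mul, hPT, sub_zero]
  have hTQ : T * (1 - P₁) = 0 := by rw [mul_sub, mul_one, hTP, sub_self]
  have hTT : T * T = 0 := by
    nth_rewrite 2 [← hQT]
    rw [← mul_assoc, hTQ, zero_mul]
  have hstarT : star T = S := star_eq_adjoint T
  have hstarS : star S = T := by rw [hSdef, star_eq_adjoint, adjoint_adjoint]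
  have hSP : S * P₁ = 0 := by
    have h := congrArg star hPT
    rwa [star_mul, hstarT, hP₁sa.star_eq, star_zero] at h
  have hPS : P₁ * S = S := by
    have h := congrArg star hTP
    rwa [star_mul, hstarT, hP₁sa.star_eq] at h
  have hstarQ : star (1 - P₁ : K →L[ℂ] K) = 1 - P₁ := by
    rw [star_sub, star_one, hP₁sa.star_eq]
  have hSQ : S * (1 - P₁) = S := by
    have h := congrArg star hQT
    rwa [star_mul, hstarT, hstarQ] at h
  have hQS : (1 - P₁) * S = 0 := by
    have h := congrArg star hTQ
    rwa [star_mul, hstarT, hstarQ, star_zero] at h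
  have hSS : S * S = 0 := by
    have h := congrArg star hTT
    rwa [star_mul, hstarT, star_zero] at h
  -- support of R, R', X, X'
  have hPR : P₁ * R = R := by
    conv_lhs => rw [hRsupp, ← mul_assoc, hPP]
    exact hRsupp.symm
  have hRP : R * P₁ = R := by
    conv_lhs => rw [hRsupp, mul_assoc, mul_assoc, hPP]
    exact hRsupp.symm
  have hPR' : P₁ * R' = 0 := by
    conv_lhs => rw [hR'supp, ← mul_assoc, hQ0, zero_mul]
  have hR'P : R' * P₁ = 0 := by
    conv_lhs => rw [hR'supp, mul_assoc, mul_assoc, hQ0', mul_zero, mul_zero]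
  have hQR' : (1 - P₁) * R' = R' := by rw [sub_mul, one_mul, hPR', sub_zero]
  have hRR' : R * R' = 0 := by rw [← hRP, mul_assoc, hPR', mul_zero]
  have hR'R : R' * R = 0 := by rw [← hPR, ← mul_assoc, hR'P, zero_mul]
  have hPX : P₁ * X = X := by
    conv_lhs => rw [hX3, ← mul_assoc, hPP]
    exact hX3.symm
  have hXP : X * P₁ = X := by
    conv_lhs => rw [hX3, mul_assoc, mul_assoc, hPP]
    exact hX3.symm
  have hPX' : P₁ * X' = 0 := by
    conv_lhs => rw [hX'3, ← mul_assoc, hQ0, zero_mul]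
  have hX'P : X' * P₁ = 0 := by
    conv_lhs => rw [hX'3, mul_assoc, mul_assoc, hQ0', mul_zero, mul_zero]
  have hQX' : (1 - P₁) * X' = X' := by rw [sub_mul, one_mul, hPX', sub_zero]
  have hX'Q : X' * (1 - P₁) = X' := by rw [mul_sub, mul_one, hX'P, sub_zero]
  -- positivity and commutation
  have hR0 : (0 : K →L[ℂ] K) ≤ R := (nonneg_iff_isPositive R).mpr hRpos
  have hR'0 : (0 : K →L[ℂ] K) ≤ R' := (nonneg_iff_isPositive R').mpr hR'pos
  have hcomm : Commute (P₁ + S * T) R := by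
    refine stmt7_commute_sqrt X R _ hR0 hR ?_
    show (P₁ + S * T) * X = X * (P₁ + S * T)
    rw [hX1, hX2]
  have hcomm' : Commute ((1 - P₁) + T * S) R' := by
    refine stmt7_commute_sqrt X' R' _ hR'0 hR' ?_
    show ((1 - P₁) + T * S) * X' = X' * ((1 - P₁) + T * S)
    rw [hX'1, hX'2]
  -- intertwining relations
  have k1 : ((1 - P₁) + T * S) * T = T * (P₁ + S * T) := by
    have e1 : ((1 - P₁) + T * S) * T = (1 - P₁) * T + T * (S * T) := by noncomm_ring
    have e2 : T * (P₁ + S * T) = T * P₁ + T * (S * T) := by noncomm_ring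
    rw [e1, e2, hQT, hTP]
  have hTX : T * X = X' * T := by
    calc T * X = ((1 - P₁) * T) * X := by rw [hQT]
      _ = ((X' * ((1 - P₁) + T * S)) * T) * X := by rw [hX'2]
      _ = X' * ((((1 - P₁) + T * S)) * T) * X := by noncomm_ring
      _ = X' * (T * (P₁ + S * T)) * X := by rw [k1]
      _ = (X' * T) * ((P₁ + S * T) * X) := by noncomm_ring
      _ = (X' * T) * P₁ := by rw [hX1]
      _ = X' * (T * P₁) := by rw [mul_assoc]
      _ = X' * T := by rw [hTP]
  have k2 : (P₁ + S * T) * S = S * ((1 - P₁) + T * S) := by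
    have e1 : (P₁ + S * T) * S = P₁ * S + S * (T * S) := by noncomm_ring
    have e2 : S * ((1 - P₁) + T * S) = S * (1 - P₁) + S * (T * S) := by noncomm_ring
    rw [e1, e2, hPS, hSQ]
  have hSX' : S * X' = X * S := by
    calc S * X' = (P₁ * S) * X' := by rw [hPS]
      _ = ((X * (P₁ + S * T)) * S) * X' := by rw [hX2]
      _ = X * ((P₁ + S * T) * S) * X' := by noncomm_ring
      _ = X * (S * ((1 - P₁) + T * S)) * X' := by rw [k2]
      _ = (X * S) * (((1 - P₁) + T * S) * X') := by noncomm_ring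
      _ = (X * S) * (1 - P₁) := by rw [hX'1]
      _ = X * (S * (1 - P₁)) := by rw [mul_assoc]
      _ = X * S := by rw [hSQ]
  have cX : X * S * T = P₁ - X := by
    have h := hX2
    rw [mul_add, hXP, ← mul_assoc] at h
    exact eq_sub_of_add_eq' h
  have cX' : X' * T * S = (1 - P₁) - X' := by
    have h := hX'2
    rw [mul_add, hX'Q, ← mul_assoc] at h
    exact eq_sub_of_add_eq' h
  -- cross products
  have h1 : (P₁ + S) * (P₁ + T) = P₁ + S * T := by
    have e : (P₁ + S) * (P₁ + T) = P₁ * P₁ + P₁ * T + S * P₁ + S * T := by noncomm_ring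
    rw [e, hPP, hPT, hSP, add_zero, add_zero]
  have h2 : (P₁ + S) * ((1 - P₁) - S) = 0 := by
    have e : (P₁ + S) * ((1 - P₁) - S) = P₁ * (1 - P₁) - P₁ * S + S * (1 - P₁) - S * S := by
      noncomm_ring
    rw [e, hQ0, hPS, hSQ, hSS]
    abel
  have h3 : ((1 - P₁) - T) * (P₁ + T) = 0 := by
    have e : ((1 - P₁) - T) * (P₁ + T) = (1 - P₁) * P₁ + (1 - P₁) * T - T * P₁ - T * T := by
      noncomm_ring
    rw [e, hQ0', hQT, hTP, hTT]
    abel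
  have h4 : ((1 - P₁) - T) * ((1 - P₁) - S) = (1 - P₁) + T * S := by
    simp only [mul_sub, sub_mul, mul_one, one_mul, hPP, hPS, hTP]
    abel
  -- the adjoint of U
  have hadjU : adjoint ((P₁ + T) * R + ((1 - P₁) - S) * R') =
      R * (P₁ + S) + R' * ((1 - P₁) - T) := by
    rw [← star_eq_adjoint, star_add, star_mul, star_mul, hRpos.isSelfAdjoint.star_eq,
      hR'pos.isSelfAdjoint.star_eq, star_add, star_sub, hP₁sa.star_eq, hstarT, hstarQ, hstarS]
  -- Goal 1
  have A11 : (R * (P₁ + S)) * ((P₁ + T) * R) = P₁ := by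
    calc (R * (P₁ + S)) * ((P₁ + T) * R) = R * ((P₁ + S) * (P₁ + T)) * R := by noncomm_ring
      _ = (R * (P₁ + S * T)) * R := by rw [h1]
      _ = ((P₁ + S * T) * R) * R := by rw [← hcomm.eq]
      _ = (P₁ + S * T) * X := by rw [mul_assoc, hR]
      _ = P₁ := hX1
  have A12 : (R * (P₁ + S)) * (((1 - P₁) - S) * R') = 0 := by
    calc (R * (P₁ + S)) * (((1 - P₁) - S) * R')
        = R * ((P₁ + S) * ((1 - P₁) - S)) * R' := by noncomm_ring
      _ = 0 := by rw [h2, mul_zero, zero_mul]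
  have A21 : (R' * ((1 - P₁) - T)) * ((P₁ + T) * R) = 0 := by
    calc (R' * ((1 - P₁) - T)) * ((P₁ + T) * R)
        = R' * (((1 - P₁) - T) * (P₁ + T)) * R := by noncomm_ring
      _ = 0 := by rw [h3, mul_zero, zero_mul]
  have A22 : (R' * ((1 - P₁) - T)) * (((1 - P₁) - S) * R') = 1 - P₁ := by
    calc (R' * ((1 - P₁) - T)) * (((1 - P₁) - S) * R')
        = R' * (((1 - P₁) - T) * ((1 - P₁) - S)) * R' := by noncomm_ring
      _ = (R' * ((1 - P₁) + T * S)) * R' := by rw [h4]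
      _ = (((1 - P₁) + T * S) * R') * R' := by rw [← hcomm'.eq]
      _ = ((1 - P₁) + T * S) * X' := by rw [mul_assoc, hR']
      _ = 1 - P₁ := hX'1
  have goal1 : adjoint ((P₁ + T) * R + ((1 - P₁) - S) * R') *
      ((P₁ + T) * R + ((1 - P₁) - S) * R') = 1 := by
    rw [hadjU]
    have e : (R * (P₁ + S) + R' * ((1 - P₁) - T)) * ((P₁ + T) * R + ((1 - P₁) - S) * R') =
        (R * (P₁ + S)) * ((P₁ + T) * R) + (R * (P₁ + S)) * (((1 - P₁) - S) * R') +
        (R' * ((1 - P₁) - T)) * ((P₁ + T) * R) +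
        (R' * ((1 - P₁) - T)) * (((1 - P₁) - S) * R') := by noncomm_ring
    rw [e, A11, A12, A21, A22]
    abel
  -- the range projection identity
  have e1 : (P₁ + T) * X * (P₁ + S) = X + X * S + X' * T + X' * T * S := by
    have e : (P₁ + T) * X * (P₁ + S) = P₁ * X * P₁ + P₁ * X * S + T * X * P₁ + T * X * S := by
      noncomm_ring
    rw [e, hPX, hXP, hTX]
    rw [mul_assoc X' T P₁, hTP]
  have e2 : ((1 - P₁) - S) * X' * ((1 - P₁) - T) = X' - X' * T - X * S + X * S * T := by
    have e : ((1 - P₁) - S) * X' * ((1 - P₁) - T) =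
        (1 - P₁) * X' * (1 - P₁) - (1 - P₁) * X' * T - S * X' * (1 - P₁) + S * X' * T := by
      noncomm_ring
    rw [e, hQX', hX'Q, hSX']
    rw [mul_assoc X S (1 - P₁), hSQ]
  have hfinal : (P₁ + T) * X * (P₁ + S) + ((1 - P₁) - S) * X' * ((1 - P₁) - T) = 1 := by
    rw [e1, e2, cX, cX']
    abel
  -- Goal 2
  have goal2 : ((P₁ + T) * R + ((1 - P₁) - S) * R') *
      adjoint ((P₁ + T) * R + ((1 - P₁) - S) * R') = 1 := by
    rw [hadjU]
    have e : ((P₁ + T) * R + ((1 - P₁) - S) * R') * (R * (P₁ + S) + R' * ((1 - P₁) - T)) =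
        (P₁ + T) * (R * R) * (P₁ + S) + (P₁ + T) * (R * R') * ((1 - P₁) - T) +
        ((1 - P₁) - S) * (R' * R) * (P₁ + S) +
        ((1 - P₁) - S) * (R' * R') * ((1 - P₁) - T) := by noncomm_ring
    rw [e, hR, hR', hRR', hR'R, mul_zero, zero_mul, mul_zero, zero_mul, add_zero, add_zero]
    exact hfinal
  -- Goal 3
  have cT : conjOp J T = -S := by
    have h := congrArg (conjOp J) hTanti
    rw [conjOp_conjOp J hJ, conjOp_neg] at h
    rw [h, neg_neg]
  have goal3 : conjOp J ((P₁ + T) * R + ((1 - P₁) - S) * R') =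
      (P₁ + T) * R + ((1 - P₁) - S) * R' := by
    have cQ : conjOp J (1 - P₁ : K →L[ℂ] K) = P₁ := by
      rw [conjOp_sub, conjOp_one J hJ, hP₁conj]
      abel
    have cXX : conjOp J X = X' := by
      have b1 : conjOp J (P₁ + S * T) = (1 - P₁) + T * S := by
        rw [conjOp_add, conjOp_mul J hJ, hP₁conj, hTanti, cT, neg_mul_neg]
      have e2' : conjOp J X * ((1 - P₁) + T * S) = 1 - P₁ := by
        have h := congrArg (conjOp J) hX2
        rwa [conjOp_mul J hJ, b1, hP₁conj] at h
      have e3 : conjOp J X * (1 - P₁) = conjOp J X := by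
        have h := congrArg (conjOp J) hXP
        rwa [conjOp_mul J hJ, hP₁conj] at h
      calc conjOp J X = conjOp J X * (1 - P₁) := e3.symm
        _ = conjOp J X * (((1 - P₁) + T * S) * X') := by rw [hX'1]
        _ = (conjOp J X * ((1 - P₁) + T * S)) * X' := by rw [mul_assoc]
        _ = (1 - P₁) * X' := by rw [e2']
        _ = X' := hQX'
    have cRR : conjOp J R = R' := by
      refine stmt7_pos_sqrt_unique _ _
        ((nonneg_iff_isPositive _).mpr (conjOp_isPositive J hJ R hRpos)) hR'0 ?_
      rw [← conjOp_mul J hJ, hR, cXX, hR']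
    have cRR' : conjOp J R' = R := by
      have h := congrArg (conjOp J) cRR
      rw [conjOp_conjOp J hJ] at h
      exact h.symm
    rw [conjOp_add, conjOp_mul J hJ, conjOp_mul J hJ, conjOp_add, conjOp_sub, cQ,
      hP₁conj, cT, hTanti, cRR, cRR']
    noncomm_ring
  -- Goal 4
  have goal4 : ((P₁ + T) * R + ((1 - P₁) - S) * R') * P₁ *
      adjoint ((P₁ + T) * R + ((1 - P₁) - S) * R') = (P₁ + T) * X * (P₁ + S) := by
    rw [hadjU]
    have eUP : ((P₁ + T) * R + ((1 - P₁) - S) * R') * P₁ = (P₁ + T) * R := by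
      have e : ((P₁ + T) * R + ((1 - P₁) - S) * R') * P₁ =
          (P₁ + T) * (R * P₁) + ((1 - P₁) - S) * (R' * P₁) := by noncomm_ring
      rw [e, hRP, hR'P, mul_zero, add_zero]
    rw [eUP]
    have e : ((P₁ + T) * R) * (R * (P₁ + S) + R' * ((1 - P₁) - T)) =
        (P₁ + T) * (R * R) * (P₁ + S) + (P₁ + T) * (R * R') * ((1 - P₁) - T) := by
      noncomm_ring
    rw [e, hR, hRR', mul_zero, zero_mul, add_zero]
  -- Goal 5
  have goal5 : IsHS (((P₁ + T) * R + ((1 - P₁) - S) * R') - 1) := by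
    have hR'Q : R' * (1 - P₁) = R' := by rw [mul_sub, mul_one, hR'P, sub_zero]
    have hXmP : IsHS (X - P₁) := by
      have h : X - P₁ = -((X * S) ∘L T) := by
        have e : (X * S) ∘L T = X * S * T := rfl
        rw [e, cX, neg_sub]
      rw [h]
      exact (hTHS.compL (X * S)).neg'
    have hX'mQ : IsHS (X' - (1 - P₁)) := by
      have h : X' - (1 - P₁) = -((X' * T) ∘L S) := by
        have e : (X' * T) ∘L S = X' * T * S := rfl
        rw [e, cX', neg_sub]
      rw [h]
      exact ((hTHS.adjoint').compL (X' * T)).neg'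
    have uR : IsUnit (1 + R) := stmt7_isUnit_one_add R hR0
    have uR' : IsUnit (1 + R') := stmt7_isUnit_one_add R' hR'0
    have keyR : (1 + R) * (R - P₁) = X - P₁ := by
      have e : (1 + R) * (R - P₁) = R * R + R - R * P₁ - P₁ := by noncomm_ring
      rw [e, hR, hRP]
      abel
    have keyR' : (1 + R') * (R' - (1 - P₁)) = X' - (1 - P₁) := by
      have e : (1 + R') * (R' - (1 - P₁)) = R' * R' + R' - R' * (1 - P₁) - (1 - P₁) := by
        noncomm_ring
      rw [e, hR', hR'Q]
      abel
    have hRmP : IsHS (R - P₁) := by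
      have h : R - P₁ = (↑uR.unit⁻¹ : K →L[ℂ] K) ∘L (X - P₁) := by
        have e : (↑uR.unit⁻¹ : K →L[ℂ] K) ∘L (X - P₁) = ↑uR.unit⁻¹ * (X - P₁) := rfl
        rw [e, ← keyR, ← mul_assoc, IsUnit.val_inv_mul, one_mul]
      rw [h]
      exact hXmP.compL _
    have hR'mQ : IsHS (R' - (1 - P₁)) := by
      have h : R' - (1 - P₁) = (↑uR'.unit⁻¹ : K →L[ℂ] K) ∘L (X' - (1 - P₁)) := by
        have e : (↑uR'.unit⁻¹ : K →L[ℂ] K) ∘L (X' - (1 - P₁)) =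
            (↑uR'.unit⁻¹ : K →L[ℂ] K) * (X' - (1 - P₁)) := rfl
        rw [e, ← keyR', ← mul_assoc, IsUnit.val_inv_mul, one_mul]
      rw [h]
      exact hX'mQ.compL _
    have hTR : IsHS (T * R) := hTHS.compR R
    have hSR' : IsHS (S * R') := (hTHS.adjoint').compR R'
    have hdec : (P₁ + T) * R + ((1 - P₁) - S) * R' - 1 =
        ((R - P₁) + T * R) + ((R' - (1 - P₁)) - S * R') := by
      have e1' : (P₁ + T) * R = P₁ * R + T * R := by noncomm_ring
      have e2' : ((1 - P₁) - S) * R' = (1 - P₁) * R' - S * R' := by noncomm_ring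
      rw [e1', e2', hPR, hQR']
      abel
    rw [hdec]
    exact (hRmP.add' hTR).add' (hR'mQ.sub' hSR')
  exact ⟨goal1, goal2, goal3, goal4, goal5⟩
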